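/- arXiv:2506.17460 — 2 statements merged into one kernel-verified Lean document; each statement's English description precedes it below -/
import Mathlib

section
/- Let (σ_n)_{n∈ℕ} be a sequence of substitutions over Σ and (a_n)_{n∈ℕ} a sequence of letters. If α ∈ Σ^+ ∪ Σ^ω is an accumulation point of the set {σ_0⋯σ_n(a_n) : n ∈ ℕ} in Σ^∞ (i.e., some subsequence of (σ_0⋯σ_n(a_n))_{n∈ℕ} converges to α), then α is directed by (σ_n)_{n∈ℕ}. -/
universe u

variable {A : Type u}

/-- Finite or infinite words over `A`, plus `⊥` (`Word.bot`) representing divergence. -/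
inductive Word (A : Type u) : Type u
  | fin : List A → Word A
  | inf : (ℕ → A) → Word A
  | bot : Word A

namespace Word

/-- `α` lies in `Σ⁺ ∪ Σ^ω`: it is a nonempty finite word or an infinite word. -/
def IsProper : Word A → Prop
  | fin l => l ≠ []
  | inf _ => True
  | bot => False

/-- `α` is an infinite word. -/
def IsInf : Word A → Prop
  | inf _ => True
  | _ => False

/-- Concatenation, with the conventions `α·x = α` for infinite `α`, `⊥·x = ⊥`,
and `u·⊥ = ⊥` for finite `u`. -/
def cat : Word A → Word A → Word A
  | fin u, fin v => fin (u ++ v)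
  | fin u, inf f => inf (fun n => if h : n < u.length then u.get ⟨n, h⟩ else f (n - u.length))
  | fin _, bot => bot
  | inf f, _ => inf f
  | bot, _ => bot

/-- The finite word `u` is a prefix of the word `α`. -/
def hasPrefix : Word A → List A → Prop
  | fin v, u => u <+: v
  | inf f, u => u = List.ofFn (fun i : Fin u.length => f i.1)
  | bot, _ => False

/-- The periodic infinite word `u^ω` for a nonempty finite word `u`. -/
def perW (u : List A) (hu : u ≠ []) : Word A :=
  inf (fun n => u.get ⟨n % u.length, Nat.mod_lt n (List.length_pos_iff.mpr hu)⟩)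

end Word

/-- Concatenation of a finite list of finite words. -/
def flat : List (List A) → List A
  | [] => []
  | x :: t => x ++ flat t

/-- A substitution: a non-erasing morphism `Σ* → Σ*`, given by its images on letters. -/
def Subst (A : Type u) : Type u := {f : A → List A // ∀ a, f a ≠ []}

namespace Subst

/-- Application of a substitution to a finite word. -/
def apply (σ : Subst A) : List A → List A
  | [] => []
  | a :: t => σ.1 a ++ apply σ t

theorem apply_ne_nil (σ : Subst A) : ∀ {w : List A}, w ≠ [] → σ.apply w ≠ []
  | [], hw => absurd rfl hw
  | a :: t, _ => by
    cases hσ : σ.1 a with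
    | nil => exact absurd hσ (σ.2 a)
    | cons b r => simp [apply, hσ]

/-- Composition of substitutions (`comp σ μ = σ ∘ μ`). -/
def comp (σ μ : Subst A) : Subst A :=
  ⟨fun a => σ.apply (μ.1 a), fun a => σ.apply_ne_nil (μ.2 a)⟩

/-- The identity substitution. -/
def idS (A : Type u) : Subst A :=
  ⟨fun a => [a], fun _ => by simp⟩

/-- Iterated application `σ^n`. -/
def iter (σ : Subst A) : ℕ → List A → List A
  | 0, w => w
  | n + 1, w => σ.apply (iter σ n w)

/-- Application of a substitution to an infinite word. -/
def applyInf (σ : Subst A) (f : ℕ → A) : ℕ → A :=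
  fun n => (σ.apply ((List.range (n + 1)).map f)).getD n (f 0)

/-- Application of a substitution to a (finite, infinite or bottom) word. -/
def applyWord (σ : Subst A) : Word A → Word A
  | Word.fin l => Word.fin (σ.apply l)
  | Word.inf f => Word.inf (σ.applyInf f)
  | Word.bot => Word.bot

/-- `σ` is positive: every letter `b` appears in `σ(c)` for every letter `c`. -/
def Positive (σ : Subst A) : Prop := ∀ b c : A, b ∈ σ.1 c

/-- `σ` is left-proper: all images of letters begin with the same letter. -/
def LeftProper (σ : Subst A) : Prop := ∃ b : A, ∀ a : A, (σ.1 a).head? = some b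

end Subst

/-- `applyComp s n w = σ₀⋯σ_{n-1}(w)`. -/
def applyComp (s : ℕ → Subst A) (n : ℕ) (w : List A) : List A :=
  (List.range n).foldr (fun i acc => (s i).apply acc) w

/-- `applySeg s n m w = σ_n⋯σ_m(w)` (for `n ≤ m`). -/
def applySeg (s : ℕ → Subst A) (n m : ℕ) (w : List A) : List A :=
  (List.range (m + 1 - n)).foldr (fun i acc => (s (n + i)).apply acc) w

/-- A directive sequence is weakly primitive if for every `n` there is `m ≥ n`
such that `σ_n ∘ ⋯ ∘ σ_m` is positive. -/
def WeaklyPrimitive (s : ℕ → Subst A) : Prop :=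
  ∀ n, ∃ m, n ≤ m ∧ ∀ b c : A, b ∈ applySeg s n m [c]

open Classical in
/-- The limit of a sequence of finite words: the eventual value if the sequence is
eventually constant; the infinite word β if for every `j` the first `j` letters are
eventually those of β; `Word.bot` otherwise. -/
noncomputable def limWord (u : ℕ → List A) : Word A :=
  if h : ∃ v : List A, ∃ N : ℕ, ∀ n, N ≤ n → u n = v then Word.fin h.choose
  else if h2 : ∃ β : ℕ → A, ∀ j : ℕ, ∃ N : ℕ, ∀ n, N ≤ n → (u n).take j = (List.range j).map β
    then Word.inf h2.choose
  else Word.bot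

/-- `σ^ω(u) = lim_n σ^n(u)`, with `σ^ω(ε) = ε`. -/
noncomputable def Subst.omegaPow (σ : Subst A) : List A → Word A
  | [] => Word.fin []
  | w@(_ :: _) => limWord (fun n => σ.iter n w)

/-- The directive sequence `s` directs the word `α`. -/
def Directs (s : ℕ → Subst A) (α : Word A) : Prop :=
  ∃ β : ℕ → Word A, β 0 = α ∧ (∀ n, (β n).IsProper) ∧ ∀ n, β n = (s n).applyWord (β (n + 1))

/-- `(σ_n, a_n)` is congenial: `σ_{n+1}(a_{n+1})` begins with `a_n`. -/
def Congenial (s : ℕ → Subst A) (a : ℕ → A) : Prop :=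
  ∀ n, ((s (n + 1)).1 (a (n + 1))).head? = some (a n)

/-- The word generated by `(σ_n, a_n)`: `lim_n σ₀⋯σ_n(a_n)`. -/
noncomputable def genWord (s : ℕ → Subst A) (a : ℕ → A) : Word A :=
  limWord (fun n => applyComp s (n + 1) [a n])

/-- `α` is an `s`-congenial word. -/
def SCongenial (s : ℕ → Subst A) (α : Word A) : Prop :=
  α.IsProper ∧ ∃ a : ℕ → A, Congenial s a ∧ genWord s a = α

/-- Auxiliary function for `segs`. -/
def segsAux [DecidableEq A] : List A → List A → A → List A → List (A × List A)
  | [], _, b, cur => [(b, cur.reverse)]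
  | x :: t, seen, b, cur =>
    if x ∈ seen then segsAux t seen b (x :: cur)
    else (b, cur.reverse) :: segsAux t (x :: seen) x []

/-- The factorisation `w = b₁v₁⋯b_dv_d` of a word based on first occurrences of letters,
returned as the list `[(b₁, v₁), …, (b_d, v_d)]`. -/
def segs [DecidableEq A] : List A → List (A × List A)
  | [] => []
  | x :: t => segsAux t [x] x []

/-- Substitutions `σ, τ` are equivalent modulo the monoid `M`:
`segments_σ(a, h) = segments_τ(a, h)` for every letter `a` and homomorphism `h : Σ* → M`. -/
def SegEquiv [DecidableEq A] (M : Type*) [Monoid M] (σ τ : Subst A) : Prop :=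
  ∀ (a : A) (h : FreeMonoid A →* M),
    (segs (σ.1 a)).map (fun p => (p.1, h (FreeMonoid.ofList p.2))) =
    (segs (τ.1 a)).map (fun p => (p.1, h (FreeMonoid.ofList p.2)))

/-- The setoid of substitutions modulo `M`; its quotient is `Ξ_M`. -/
def segSetoid (A : Type u) [DecidableEq A] (M : Type*) [Monoid M] : Setoid (Subst A) where
  r := SegEquiv M
  iseqv := ⟨fun _ _ _ => rfl, fun h a hm => (h a hm).symm,
    fun h1 h2 a hm => (h1 a hm).trans (h2 a hm)⟩

section Helpers

variable {A : Type u}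

theorem Subst.apply_append' (σ : Subst A) (u v : List A) :
    σ.apply (u ++ v) = σ.apply u ++ σ.apply v := by
  induction u with
  | nil => rfl
  | cons x t ih => simp [Subst.apply, ih]

theorem Subst.length_le_apply' (σ : Subst A) (l : List A) :
    l.length ≤ (σ.apply l).length := by
  induction l with
  | nil => simp [Subst.apply]
  | cons x t ih =>
    have h1 : 0 < (σ.1 x).length := List.length_pos_iff.mpr (σ.2 x)
    simp only [Subst.apply, List.length_append, List.length_cons]
    omega

theorem Subst.apply_prefix' (σ : Subst A) {u v : List A} (h : u <+: v) :
    σ.apply u <+: σ.apply v := by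
  obtain ⟨w, rfl⟩ := h
  rw [Subst.apply_append']
  exact List.prefix_append _ _

/-- The letter of a word at position `i`, if any. -/
def wletter : Word A → ℕ → Option A
  | Word.fin l, i => l[i]?
  | Word.inf f, i => some (f i)
  | Word.bot, _ => none

theorem wletter_injective : ∀ {x y : Word A}, x ≠ Word.bot → y ≠ Word.bot →
    (∀ i, wletter x i = wletter y i) → x = y := by
  intro x y hx hy h
  cases x with
  | bot => exact absurd rfl hx
  | fin l =>
    cases y with
    | bot => exact absurd rfl hy
    | fin m => exact congrArg Word.fin (List.ext_getElem? h)
    | inf f =>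
      exact absurd (h l.length)
        (by simp [wletter, List.getElem?_eq_none (le_refl l.length)])
  | inf f =>
    cases y with
    | bot => exact absurd rfl hy
    | fin m =>
      exact absurd (h m.length)
        (by simp [wletter, List.getElem?_eq_none (le_refl m.length)])
    | inf g => exact congrArg Word.inf (funext fun i => Option.some_injective _ (h i))

theorem prefix_of_getElem?' {p : List A} : ∀ {l : List A},
    (∀ j, j < p.length → l[j]? = p[j]?) → p <+: l := by
  induction p with
  | nil => exact fun _ => List.nil_prefix
  | cons x q ih =>
    intro l h
    cases l with
    | nil => simpa using h 0 (by simp)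
    | cons y m =>
      have h0 := h 0 (by simp)
      simp only [List.getElem?_cons_zero, Option.some.injEq] at h0
      subst h0
      obtain ⟨w, rfl⟩ := ih (l := m) (fun j hj => by
        have := h (j + 1) (by simpa using hj)
        simpa using this)
      exact ⟨w, by simp⟩

theorem isPrefix_getElem?_eq {p l : List A} (h : p <+: l) {j : ℕ} (hj : j < p.length) :
    l[j]? = p[j]? := by
  obtain ⟨w, rfl⟩ := h
  simp [List.getElem?_append, hj]

theorem eventually_all_lt' {F : Filter ℕ} {P : ℕ → ℕ → Prop} (m : ℕ)
    (h : ∀ j, j < m → ∀ᶠ k in F, P j k) : ∀ᶠ k in F, ∀ j, j < m → P j k := by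
  induction m with
  | zero => simp
  | succ n ih =>
    have h2 := (ih (fun j hj => h j (Nat.lt_succ_of_lt hj))).and (h n (Nat.lt_succ_self n))
    filter_upwards [h2] with k hk j hj
    rcases Nat.lt_succ_iff_lt_or_eq.mp hj with h' | rfl
    · exact hk.1 j h'
    · exact hk.2

theorem exists_ulim {B : Type*} [Finite B] (U : Ultrafilter ℕ) (g : ℕ → B) :
    ∃ b, ∀ᶠ k in (U : Filter ℕ), g k = b := by
  by_contra hcon
  push_neg at hcon
  have h1 : ∀ b : B, {k | g k ≠ b} ∈ (U : Filter ℕ) := by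
    intro b
    have : {k | g k = b} ∉ (U : Filter ℕ) := fun hm => by
      obtain ⟨k, hk1, hk2⟩ := ((hcon b).and hm).exists
      exact hk1 hk2
    exact Ultrafilter.compl_mem_iff_notMem.mpr this
  have h2 : (⋂ b : B, {k | g k ≠ b}) ∈ (U : Filter ℕ) := Filter.iInter_mem.mpr h1
  have h3 : (⋂ b : B, {k | g k ≠ b}) = (∅ : Set ℕ) := by
    ext k
    simp only [Set.mem_iInter, Set.mem_setOf_eq, Set.mem_empty_iff_false, iff_false, not_forall,
      not_not]
    exact ⟨g k, rfl⟩
  rw [h3] at h2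
  exact Filter.empty_notMem _ h2

theorem applySeg_ne_nil' (s : ℕ → Subst A) (n m : ℕ) {w : List A} (hw : w ≠ []) :
    applySeg s n m w ≠ [] := by
  unfold applySeg
  generalize List.range (m + 1 - n) = l
  induction l with
  | nil => exact hw
  | cons x t ih => exact (s (n + x)).apply_ne_nil ih

theorem applySeg_step' (s : ℕ → Subst A) {n m : ℕ} (h : n ≤ m) (w : List A) :
    applySeg s n m w = (s n).apply (applySeg s (n + 1) m w) := by
  unfold applySeg
  have h1 : m + 1 - n = (m + 1 - (n + 1)) + 1 := by omega
  rw [h1, List.range_succ_eq_map]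
  simp only [List.foldr_cons, List.foldr_map, Nat.add_zero]
  have h2 : (fun (x : ℕ) (y : List A) => (s (n + x.succ)).apply y)
      = fun (i : ℕ) (acc : List A) => (s (n + 1 + i)).apply acc := by
    funext x y
    have h3 : n + x.succ = n + 1 + x := by omega
    rw [h3]
  rw [h2]

theorem applySeg_zero' (s : ℕ → Subst A) (m : ℕ) (w : List A) :
    applySeg s 0 m w = applyComp s (m + 1) w := by
  unfold applySeg applyComp
  simp only [Nat.sub_zero]
  congr 1
  funext i acc
  rw [Nat.zero_add]

open Classical in
/-- Reconstruct a word from its letter function. -/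
noncomputable def wordOfLetters [Nonempty A] (c : ℕ → Option A) : Word A :=
  if h : ∃ i, c i = none then
    Word.fin ((List.range (Nat.find h)).map fun i => (c i).getD (Classical.arbitrary A))
  else Word.inf fun i => (c i).getD (Classical.arbitrary A)

theorem wordOfLetters_ne_bot [Nonempty A] (c : ℕ → Option A) :
    wordOfLetters c ≠ Word.bot := by
  unfold wordOfLetters
  split <;> simp

theorem wletter_wordOfLetters [Nonempty A] (c : ℕ → Option A)
    (hmono : ∀ i, c i = none → c (i + 1) = none) (i : ℕ) :
    wletter (wordOfLetters c) i = c i := by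
  classical
  unfold wordOfLetters
  split
  case isTrue h =>
    show ((List.range (Nat.find h)).map fun i => (c i).getD (Classical.arbitrary A))[i]? = c i
    by_cases hij : i < Nat.find h
    · rw [List.getElem?_map, List.getElem?_range hij]
      obtain ⟨b, hb⟩ := Option.ne_none_iff_exists'.mp (Nat.find_min h hij)
      simp [hb]
    · have hlen : ((List.range (Nat.find h)).map
          fun i => (c i).getD (Classical.arbitrary A)).length ≤ i := by
        simp only [List.length_map, List.length_range]
        omega
      rw [List.getElem?_eq_none hlen]
      have hall : ∀ d, c (Nat.find h + d) = none := by
        intro d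
        induction d with
        | zero => exact Nat.find_spec h
        | succ e ihe => exact hmono _ ihe
      have := hall (i - Nat.find h)
      rw [show Nat.find h + (i - Nat.find h) = i by omega] at this
      rw [this]
  case isFalse h =>
    show some ((c i).getD (Classical.arbitrary A)) = c i
    push_neg at h
    obtain ⟨b, hb⟩ := Option.ne_none_iff_exists'.mp (h i)
    rw [hb]
    rfl

theorem wordOfLetters_isProper [Nonempty A] (c : ℕ → Option A) (h0 : c 0 ≠ none) :
    (wordOfLetters c).IsProper := by
  classical
  unfold wordOfLetters
  split
  case isTrue h =>
    show ((List.range (Nat.find h)).map fun i => (c i).getD (Classical.arbitrary A)) ≠ []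
    have hpos : 0 < Nat.find h :=
      Nat.pos_of_ne_zero (fun h0' => h0 (h0' ▸ Nat.find_spec h))
    simp only [ne_eq, List.map_eq_nil_iff, List.range_eq_nil]
    omega
  case isFalse h =>
    show True
    trivial

theorem applyWord_ne_bot (σ : Subst A) {x : Word A} (hx : x ≠ Word.bot) :
    σ.applyWord x ≠ Word.bot := by
  cases x with
  | bot => exact absurd rfl hx
  | fin l => simp [Subst.applyWord]
  | inf f => simp [Subst.applyWord]

end Helpers

/-- If `α ∈ Σ⁺ ∪ Σ^ω` is an accumulation point of
`{σ₀⋯σ_n(a_n) : n ∈ ℕ}`, i.e. some subsequence of `(σ₀⋯σ_n(a_n))_n` converges to `α`,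
then `α` is directed by `(σ_n)_n`. -/
theorem accumulation_point_is_directed {A : Type u} [Fintype A] [Nonempty A]
    (s : ℕ → Subst A) (a : ℕ → A) (α : Word A) (hα : α.IsProper)
    (φ : ℕ → ℕ) (hφ : StrictMono φ)
    (hlim : limWord (fun k => applyComp s (φ k + 1) [a (φ k)]) = α) :
    Directs s α := by
  classical
  set U := Filter.hyperfilter ℕ with hUdef
  have hcof : ∀ m : ℕ, ∀ᶠ k in (U : Filter ℕ), m ≤ k := by
    intro m
    have h1 : ∀ᶠ k in Filter.cofinite, m ≤ k := by
      rw [Nat.cofinite_eq_atTop]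
      exact Filter.eventually_atTop.mpr ⟨m, fun k hk => hk⟩
    exact h1.filter_mono Filter.hyperfilter_le_cofinite
  have hcofφ : ∀ m : ℕ, ∀ᶠ k in (U : Filter ℕ), m ≤ φ k := by
    intro m
    filter_upwards [hcof m] with k hk
    exact hk.trans hφ.le_apply
  have hc : ∀ n i : ℕ, ∃ o : Option A, ∀ᶠ k in (U : Filter ℕ),
      (applySeg s n (φ k) [a (φ k)])[i]? = o := fun n i => exists_ulim U _
  choose c Hc using hc
  have hne : ∀ n k, applySeg s n (φ k) [a (φ k)] ≠ [] :=
    fun n k => applySeg_ne_nil' s n (φ k) (by simp)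
  have hc0 : ∀ n, c n 0 ≠ none := by
    intro n hcn
    obtain ⟨k, hk⟩ := (Hc n 0).exists
    rw [hcn] at hk
    exact hne n k (List.length_eq_zero_iff.mp (Nat.le_zero.mp (List.getElem?_eq_none_iff.mp hk)))
  have hmono : ∀ n i, c n i = none → c n (i + 1) = none := by
    intro n i hni
    obtain ⟨k, hk1, hk2⟩ := ((Hc n i).and (Hc n (i + 1))).exists
    rw [hni] at hk1
    have hlen := List.getElem?_eq_none_iff.mp hk1
    rw [← hk2]
    exact List.getElem?_eq_none (by omega)
  have hstep : ∀ n : ℕ, ∀ᶠ k in (U : Filter ℕ),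
      applySeg s n (φ k) [a (φ k)] = (s n).apply (applySeg s (n + 1) (φ k) [a (φ k)]) := by
    intro n
    filter_upwards [hcofφ n] with k hk
    exact applySeg_step' s hk _
  refine ⟨fun n => wordOfLetters (c n), ?_, fun n => wordOfLetters_isProper _ (hc0 n), ?_⟩
  · -- β 0 = α
    have hαbot : α ≠ Word.bot := by
      intro h
      rw [h] at hα
      exact hα
    apply wletter_injective (wordOfLetters_ne_bot _) hαbot
    intro i
    rw [wletter_wordOfLetters _ (hmono 0) i]
    have hu : ∀ k, applyComp s (φ k + 1) [a (φ k)] = applySeg s 0 (φ k) [a (φ k)] :=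
      fun k => (applySeg_zero' s (φ k) _).symm
    unfold limWord at hlim
    split at hlim
    case isTrue h =>
      obtain ⟨N, hN⟩ := h.choose_spec
      obtain ⟨k, hk1, hk2⟩ := ((Hc 0 i).and (hcof N)).exists
      have hv : applySeg s 0 (φ k) [a (φ k)] = h.choose := by
        rw [← hu k]
        exact hN k hk2
      rw [← hk1, hv, ← hlim]
      rfl
    case isFalse h =>
      split at hlim
      case isTrue h2 =>
        obtain ⟨N, hN⟩ := h2.choose_spec (i + 1)
        obtain ⟨k, hk1, hk2⟩ := ((Hc 0 i).and (hcof N)).exists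
        have htake : (applySeg s 0 (φ k) [a (φ k)]).take (i + 1)
            = (List.range (i + 1)).map h2.choose := by
          rw [← hu k]
          exact hN k hk2
        have hgi : (applySeg s 0 (φ k) [a (φ k)])[i]? = some (h2.choose i) := by
          have := congrArg (fun l => l[i]?) htake
          simpa [List.getElem?_take, List.getElem?_map,
            List.getElem?_range (Nat.lt_succ_self i)] using this
        rw [← hk1, hgi, ← hlim]
        rfl
      case isFalse h2 =>
        rw [← hlim] at hα
        exact absurd hα (by simp [Word.IsProper])
  · -- recurrence
    intro n
    have hγlet : ∀ j, wletter (wordOfLetters (c (n + 1))) j = c (n + 1) j :=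
      wletter_wordOfLetters _ (hmono (n + 1))
    apply wletter_injective (wordOfLetters_ne_bot _)
      (applyWord_ne_bot _ (wordOfLetters_ne_bot _))
    intro i
    rw [wletter_wordOfLetters _ (hmono n) i]
    cases hγ : wordOfLetters (c (n + 1)) with
    | bot => exact absurd hγ (wordOfLetters_ne_bot _)
    | fin v =>
      have hv : ∀ j, c (n + 1) j = v[j]? := by
        intro j
        rw [← hγlet j, hγ]
        rfl
      have hev : ∀ᶠ k in (U : Filter ℕ), applySeg s (n + 1) (φ k) [a (φ k)] = v := by
        have hall := eventually_all_lt' (F := (U : Filter ℕ))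
          (P := fun j k => (applySeg s (n + 1) (φ k) [a (φ k)])[j]? = c (n + 1) j)
          (v.length + 1) (fun j _ => Hc (n + 1) j)
        filter_upwards [hall] with k hk
        apply List.ext_getElem?
        intro j
        by_cases hj : j < v.length + 1
        · rw [hk j hj, hv j]
        · have hlenv : (applySeg s (n + 1) (φ k) [a (φ k)]).length ≤ v.length := by
            apply List.getElem?_eq_none_iff.mp
            rw [hk v.length (by omega), hv v.length]
            exact List.getElem?_eq_none (le_refl _)
          rw [List.getElem?_eq_none (by omega), List.getElem?_eq_none (by omega)]
      obtain ⟨k, hk1, hk2, hk3⟩ := ((Hc n i).and (hev.and (hstep n))).exists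
      rw [← hk1, hk3, hk2]
      rfl
    | inf f =>
      have hf : ∀ j, c (n + 1) j = some (f j) := by
        intro j
        rw [← hγlet j, hγ]
        rfl
      have hplen : ((List.range (i + 1)).map f).length = i + 1 := by simp
      have hev : ∀ᶠ k in (U : Filter ℕ),
          (List.range (i + 1)).map f <+: applySeg s (n + 1) (φ k) [a (φ k)] := by
        have hall := eventually_all_lt' (F := (U : Filter ℕ))
          (P := fun j k => (applySeg s (n + 1) (φ k) [a (φ k)])[j]? = c (n + 1) j)
          (i + 1) (fun j _ => Hc (n + 1) j)
        filter_upwards [hall] with k hk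
        apply prefix_of_getElem?'
        intro j hj
        rw [hplen] at hj
        rw [hk j hj, hf j, List.getElem?_map, List.getElem?_range hj]
        rfl
      obtain ⟨k, hk1, hk2, hk3⟩ := ((Hc n i).and (hev.and (hstep n))).exists
      have hpre := Subst.apply_prefix' (s n) hk2
      have hilt : i < ((s n).apply ((List.range (i + 1)).map f)).length := by
        have hle := Subst.length_le_apply' (s n) ((List.range (i + 1)).map f)
        rw [hplen] at hle
        omega
      rw [← hk1, hk3, isPrefix_getElem?_eq hpre hilt]
      show ((s n).apply ((List.range (i + 1)).map f))[i]? = wletter ((s n).applyWord (Word.inf f)) i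
      have : wletter ((s n).applyWord (Word.inf f)) i = some ((s n).applyInf f i) := rfl
      rw [this]
      unfold Subst.applyInf
      rw [List.getD_eq_getElem?_getD, List.getElem?_eq_getElem hilt]
      simp
end

section
/- Let s = (σ_n)_{n∈ℕ} be a directive sequence of substitutions over Σ. A word α ∈ Σ^+ ∪ Σ^ω is directed by s if and only if α can be expressed as a (finite or infinite) concatenation u_0 u_1 ⋯ of s-congenial words; that is, either α = u_0 ⋯ u_k where u_0, …, u_{k−1} are finite s-congenial words and u_k ∈ Σ^+ ∪ Σ^ω is s-congenial, or α = u_0 u_1 u_2 ⋯ is the infinite concatenation of a sequence of finite s-congenial words. -/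
universe u

variable {A : Type u}

/-! ### Auxiliary lemmas -/

section Helpers

variable {A : Type u}

namespace Subst

theorem apply_append (σ : Subst A) (u v : List A) :
    σ.apply (u ++ v) = σ.apply u ++ σ.apply v := by
  induction u with
  | nil => simp [apply]
  | cons a t ih => simp [apply, ih]

theorem apply_singleton (σ : Subst A) (a : A) : σ.apply [a] = σ.1 a := by
  simp [apply]

theorem apply_eq_nil_iff (σ : Subst A) {w : List A} : σ.apply w = [] ↔ w = [] := by
  constructor
  · intro h; by_contra hw; exact σ.apply_ne_nil hw h
  · rintro rfl; rfl

theorem length_le_apply (σ : Subst A) (w : List A) : w.length ≤ (σ.apply w).length := by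
  induction w with
  | nil => simp [apply]
  | cons a t ih =>
    have h1 : 1 ≤ (σ.1 a).length := List.length_pos_iff.mpr (σ.2 a)
    simp only [apply, List.length_append, List.length_cons]
    omega

theorem apply_prefix (σ : Subst A) {u v : List A} (h : u <+: v) :
    σ.apply u <+: σ.apply v := by
  obtain ⟨t, rfl⟩ := h
  exact ⟨σ.apply t, (σ.apply_append u t).symm⟩

end Subst

theorem foldr_congr' {β γ : Type*} {f g : γ → β → β} {b : β} :
    ∀ {l : List γ}, (∀ i ∈ l, ∀ acc, f i acc = g i acc) → l.foldr f b = l.foldr g b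
  | [], _ => rfl
  | x :: t, h => by
    simp only [List.foldr_cons]
    rw [foldr_congr' (fun i hi acc => h i (List.mem_cons_of_mem x hi) acc),
      h x List.mem_cons_self]

/-- `seg s n k w = σ_n ⋯ σ_{k-1} (w)` (and `w` if `k ≤ n`). -/
def seg (s : ℕ → Subst A) (n k : ℕ) (w : List A) : List A :=
  (List.range (k - n)).foldr (fun i acc => (s (n + i)).apply acc) w

theorem seg_of_le (s : ℕ → Subst A) {n k : ℕ} (h : k ≤ n) (w : List A) :
    seg s n k w = w := by
  simp [seg, Nat.sub_eq_zero_of_le h]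

theorem seg_succ_right (s : ℕ → Subst A) {n k : ℕ} (h : n ≤ k) (w : List A) :
    seg s n (k + 1) w = seg s n k ((s k).apply w) := by
  have h1 : k + 1 - n = (k - n) + 1 := by omega
  have h2 : n + (k - n) = k := by omega
  simp only [seg, h1, List.range_succ, List.foldr_append, List.foldr_cons, List.foldr_nil, h2]

theorem seg_succ_left (s : ℕ → Subst A) {n k : ℕ} (h : n < k) (w : List A) :
    seg s n k w = (s n).apply (seg s (n + 1) k w) := by
  obtain ⟨j, hj⟩ : ∃ j, k - n = j + 1 := ⟨k - n - 1, by omega⟩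
  have h2 : k - (n + 1) = j := by omega
  simp only [seg, hj, h2, List.range_succ_eq_map, List.foldr_cons, List.foldr_map,
    Nat.add_zero]
  congr 1
  apply foldr_congr'
  intro i _ acc
  congr 2
  omega

theorem seg_append (s : ℕ → Subst A) (n k : ℕ) (u v : List A) :
    seg s n k (u ++ v) = seg s n k u ++ seg s n k v := by
  induction' hk : k - n with j ih generalizing k u v
  · rw [seg_of_le s (by omega), seg_of_le s (by omega), seg_of_le s (by omega)]
  · have hnk : n ≤ k - 1 := by omega
    have hk1 : k = (k - 1) + 1 := by omega
    rw [hk1, seg_succ_right s hnk, seg_succ_right s hnk, seg_succ_right s hnk,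
      Subst.apply_append]
    exact ih (k-1) _ _ (by omega)

theorem seg_eq_nil_iff (s : ℕ → Subst A) (n k : ℕ) {w : List A} :
    seg s n k w = [] ↔ w = [] := by
  induction' hk : k - n with j ih generalizing k w
  · rw [seg_of_le s (by omega)]
  · have hnk : n ≤ k - 1 := by omega
    have hk1 : k = (k - 1) + 1 := by omega
    rw [hk1, seg_succ_right s hnk, ih (k-1) (by omega), Subst.apply_eq_nil_iff]

theorem seg_ne_nil (s : ℕ → Subst A) (n k : ℕ) {w : List A} (hw : w ≠ []) :
    seg s n k w ≠ [] := fun h => hw ((seg_eq_nil_iff s n k).mp h)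

theorem length_le_seg (s : ℕ → Subst A) (n k : ℕ) (w : List A) :
    w.length ≤ (seg s n k w).length := by
  induction' hk : k - n with j ih generalizing k w
  · rw [seg_of_le s (by omega)]
  · have hnk : n ≤ k - 1 := by omega
    have hk1 : k = (k - 1) + 1 := by omega
    rw [hk1, seg_succ_right s hnk]
    exact le_trans ((s (k-1)).length_le_apply w) (ih (k-1) _ (by omega))

theorem seg_prefix (s : ℕ → Subst A) (n k : ℕ) {u v : List A} (h : u <+: v) :
    seg s n k u <+: seg s n k v := by
  obtain ⟨t, rfl⟩ := h
  exact ⟨seg s n k t, (seg_append s n k u t).symm⟩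

theorem applyComp_eq_seg (s : ℕ → Subst A) (k : ℕ) (w : List A) :
    applyComp s k w = seg s 0 k w := by
  simp only [applyComp, seg, Nat.sub_zero]
  apply foldr_congr'
  intro i _ acc
  simp

end Helpers

section Helpers2

variable {A : Type u}

theorem chain_prefix_mono {u : ℕ → List A} (hch : ∀ n, u n <+: u (n + 1)) :
    ∀ {m n : ℕ}, m ≤ n → u m <+: u n := by
  intro m n h
  induction n with
  | zero => simpa [Nat.le_zero.mp h] using List.prefix_refl _
  | succ k ih =>
    rcases Nat.lt_or_ge m (k+1) with h'|h'
    · exact (ih (by omega)).trans (hch k)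
    · have : m = k + 1 := by omega
      subst this; exact List.prefix_refl _

theorem chain_getElem {u : ℕ → List A} (hch : ∀ n, u n <+: u (n + 1))
    {m n i : ℕ} (him : i < (u m).length) (hin : i < (u n).length) :
    (u m)[i] = (u n)[i] := by
  rcases le_total m n with h|h
  · exact (chain_prefix_mono hch h).getElem him
  · exact ((chain_prefix_mono hch h).getElem hin).symm

theorem limWord_eq_fin {u : ℕ → List A} {v : List A} {N : ℕ}
    (h : ∀ n, N ≤ n → u n = v) : limWord u = Word.fin v := by
  have hex : ∃ v : List A, ∃ N : ℕ, ∀ n, N ≤ n → u n = v := ⟨v, N, h⟩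
  rw [limWord, dif_pos hex]
  obtain ⟨N', hN'⟩ := hex.choose_spec
  rw [← hN' (max N N') (le_max_right _ _), h (max N N') (le_max_left _ _)]

theorem chain_cases {u : ℕ → List A} (hch : ∀ n, u n <+: u (n + 1)) :
    (∃ N, ∀ n, N ≤ n → u n = u N) ∨ (∀ k, ∃ n, k ≤ (u n).length) := by
  by_cases h : ∀ k, ∃ n, k ≤ (u n).length
  · exact Or.inr h
  push_neg at h
  obtain ⟨k, hk⟩ := h
  left
  have hmax : ∃ N, ∀ n, (u n).length ≤ (u N).length := by
    by_contra hc
    push_neg at hc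
    have : ∀ j, ∃ n, j ≤ (u n).length := by
      intro j
      induction j with
      | zero => exact ⟨0, Nat.zero_le _⟩
      | succ i ih =>
        obtain ⟨n, hn⟩ := ih
        obtain ⟨n', hn'⟩ := hc n
        exact ⟨n', by omega⟩
    obtain ⟨n, hn⟩ := this k
    exact absurd (hk n) (by omega)
  obtain ⟨N, hN⟩ := hmax
  refine ⟨N, fun n hn => ?_⟩
  have hpre := chain_prefix_mono hch hn
  exact (hpre.eq_of_length (Nat.le_antisymm hpre.length_le (hN n))).symm

theorem limWord_inf_of_chain {u : ℕ → List A} (hch : ∀ n, u n <+: u (n + 1))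
    (hub : ∀ k, ∃ n, k ≤ (u n).length) :
    ∃ β : ℕ → A, limWord u = Word.inf β ∧ ∀ n, u n = (List.range (u n).length).map β := by
  have hnotfin : ¬ ∃ v : List A, ∃ N : ℕ, ∀ n, N ≤ n → u n = v := by
    rintro ⟨v, N, hv⟩
    obtain ⟨n, hn⟩ := hub (v.length + 1)
    have h1 : u (max n N) = v := hv _ (le_max_right _ _)
    have h2 : (u n).length ≤ (u (max n N)).length :=
      (chain_prefix_mono hch (le_max_left _ _)).length_le
    rw [h1] at h2; omega
  have hβ0 : ∃ β : ℕ → A, ∀ j : ℕ, ∃ N : ℕ, ∀ n, N ≤ n →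
      (u n).take j = (List.range j).map β := by
    refine ⟨fun j => (u (hub (j+1)).choose).get ⟨j, (hub (j+1)).choose_spec⟩, fun j => ?_⟩
    refine ⟨(hub j).choose, fun n hn => ?_⟩
    have hlenN : j ≤ (u (hub j).choose).length := (hub j).choose_spec
    have hlen : j ≤ (u n).length :=
      le_trans hlenN (chain_prefix_mono hch hn).length_le
    apply List.ext_getElem
    · simp [hlen]
    · intro i hi1 hi2
      simp only [List.getElem_take, List.getElem_map, List.getElem_range, List.get_eq_getElem]
      have hi : i < j := by simpa using hi2
      exact chain_getElem hch (by omega) ((hub (i+1)).choose_spec.trans_lt' (by omega))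
  rw [limWord, dif_neg hnotfin, dif_pos hβ0]
  refine ⟨hβ0.choose, rfl, fun n => ?_⟩
  obtain ⟨N, hN⟩ := hβ0.choose_spec (u n).length
  have h1 := hN (max n N) (le_max_right _ _)
  have h2 : u n = (u (max n N)).take (u n).length := by
    have hpre := chain_prefix_mono hch (le_max_left n N : n ≤ max n N)
    exact List.prefix_iff_eq_take.mp hpre
  calc u n = (u (max n N)).take (u n).length := h2
    _ = (List.range (u n).length).map hβ0.choose := h1

namespace Word

theorem ofFn_eq_map_range {n : ℕ} (g : ℕ → A) :
    (List.ofFn fun i : Fin n => g i.1) = (List.range n).map g := by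
  apply List.ext_getElem <;> simp

theorem hasPrefix_inf_iff {f : ℕ → A} {v : List A} :
    (Word.inf f).hasPrefix v ↔ v = (List.range v.length).map f := by
  rw [hasPrefix, ofFn_eq_map_range]

theorem hasPrefix_inf_self (f : ℕ → A) (k : ℕ) :
    (Word.inf f).hasPrefix ((List.range k).map f) := by
  rw [hasPrefix_inf_iff]
  simp

theorem hasPrefix_of_prefix {f : ℕ → A} {v w : List A} (h : v <+: w)
    (hw : (Word.inf f).hasPrefix w) : (Word.inf f).hasPrefix v := by
  rw [hasPrefix_inf_iff] at hw ⊢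
  have hl : v.length ≤ w.length := h.length_le
  calc v = w.take v.length := List.prefix_iff_eq_take.mp h
    _ = ((List.range w.length).map f).take v.length := by rw [← hw]
    _ = (List.range v.length).map f := by
        rw [← List.map_take, List.take_range, Nat.min_eq_left hl]

theorem getElem_of_hasPrefix {f : ℕ → A} {v : List A} (h : (Word.inf f).hasPrefix v)
    {i : ℕ} (hi : i < v.length) : v[i] = f i := by
  rw [hasPrefix_inf_iff] at h
  rw [List.getElem_of_eq h hi]
  simp

end Word

namespace Subst

theorem prefix_applyInf (σ : Subst A) (f : ℕ → A) (m : ℕ) :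
    (Word.inf (σ.applyInf f)).hasPrefix (σ.apply ((List.range m).map f)) := by
  rw [Word.hasPrefix_inf_iff]
  apply List.ext_getElem
  · simp
  · intro n hn1 hn2
    simp only [List.getElem_map, List.getElem_range]
    have hlen2 : n + 1 ≤ (σ.apply ((List.range (n+1)).map f)).length := by
      have := σ.length_le_apply ((List.range (n+1)).map f)
      simpa using this
    have hgd : σ.applyInf f n = (σ.apply ((List.range (n+1)).map f))[n] := by
      rw [applyInf, List.getD_eq_getElem _ _ (by omega)]
    rw [hgd]
    have hpre : ∀ {j k : ℕ}, j ≤ k →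
        σ.apply ((List.range j).map f) <+: σ.apply ((List.range k).map f) := fun hjk =>
      σ.apply_prefix ((List.prefix_iff_eq_take.mpr
        (by simp [List.take_range, Nat.min_eq_left hjk])).map f)
    rcases le_total m (n+1) with h|h
    · exact (hpre h).getElem hn1
    · exact ((hpre h).getElem (by omega)).symm

theorem applyInf_unique (σ : Subst A) (f g : ℕ → A)
    (H : ∀ m, (Word.inf g).hasPrefix (σ.apply ((List.range m).map f))) :
    σ.applyInf f = g := by
  funext n
  have h1 := H (n + 1)
  have hlen : n + 1 ≤ (σ.apply ((List.range (n+1)).map f)).length := by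
    have := σ.length_le_apply ((List.range (n+1)).map f)
    simpa using this
  have h2 := Word.getElem_of_hasPrefix h1 (i := n) (by omega)
  rw [applyInf, List.getD_eq_getElem _ _ (by omega), h2]

end Subst

end Helpers2

section Helpers3

variable {A : Type u}

namespace Word

/-- The function underlying `(fin u).cat (inf g)`. -/
def mix (u : List A) (g : ℕ → A) : ℕ → A :=
  fun n => if h : n < u.length then u.get ⟨n, h⟩ else g (n - u.length)

theorem cat_fin_inf (u : List A) (g : ℕ → A) :
    (Word.fin u).cat (Word.inf g) = Word.inf (mix u g) := rfl

theorem mix_lt {u : List A} (g : ℕ → A) {n : ℕ} (h : n < u.length) :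
    mix u g n = u[n] := by simp [mix, h]

theorem mix_add (u : List A) (g : ℕ → A) (k : ℕ) :
    mix u g (u.length + k) = g k := by simp [mix]

theorem map_mix_range_le (u : List A) (g : ℕ → A) {m : ℕ} (h : m ≤ u.length) :
    (List.range m).map (mix u g) = u.take m := by
  apply List.ext_getElem
  · simp [h]
  · intro i hi1 hi2
    simp only [List.getElem_map, List.getElem_range, List.getElem_take]
    exact mix_lt g (by simp at hi1; omega)

theorem map_mix_range_add (u : List A) (g : ℕ → A) (j : ℕ) :
    (List.range (u.length + j)).map (mix u g) = u ++ (List.range j).map g := by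
  apply List.ext_getElem
  · simp
  · intro i hi1 hi2
    simp only [List.getElem_map, List.getElem_range]
    rcases Nat.lt_or_ge i u.length with h|h
    · rw [mix_lt g h, List.getElem_append_left h]
    · rw [List.getElem_append_right h]
      simp only [mix, dif_neg (Nat.not_lt.mpr h)]
      simp

theorem hasPrefix_mix_left (u : List A) (g : ℕ → A) :
    (Word.inf (mix u g)).hasPrefix u := by
  rw [hasPrefix_inf_iff]
  rw [map_mix_range_le u g le_rfl]
  simp

theorem hasPrefix_mix_append {u p : List A} {g : ℕ → A}
    (h : (Word.inf g).hasPrefix p) : (Word.inf (mix u g)).hasPrefix (u ++ p) := by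
  rw [hasPrefix_inf_iff] at h ⊢
  rw [List.length_append, map_mix_range_add, ← h]

theorem cat_proper {u : List A} (hu : u ≠ []) {w : Word A} (hw : w.IsProper) :
    ((Word.fin u).cat w).IsProper := by
  cases w with
  | fin v => simp only [cat, IsProper]; simp [hu]
  | inf f => trivial
  | bot => exact absurd hw (by simp [IsProper])

end Word

theorem flat_append (L1 L2 : List (List A)) : flat (L1 ++ L2) = flat L1 ++ flat L2 := by
  induction L1 with
  | nil => simp [flat]
  | cons x t ih => simp [flat, ih]

theorem Subst.apply_flat (σ : Subst A) (L : List (List A)) :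
    σ.apply (flat L) = flat (L.map σ.apply) := by
  induction L with
  | nil => simp [flat, Subst.apply]
  | cons x t ih => simp [flat, Subst.apply_append, ih]

theorem flat_range_succ (g : ℕ → List A) (k : ℕ) :
    flat ((List.range (k+1)).map g) = flat ((List.range k).map g) ++ g k := by
  rw [List.range_succ, List.map_append, flat_append]
  simp [flat]

theorem flat_range_prefix (g : ℕ → List A) (k : ℕ) :
    flat ((List.range k).map g) <+: flat ((List.range (k+1)).map g) := by
  rw [flat_range_succ]; exact ⟨g k, rfl⟩

theorem le_length_flat_range {g : ℕ → List A} (hg : ∀ i, g i ≠ []) (k : ℕ) :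
    k ≤ (flat ((List.range k).map g)).length := by
  induction k with
  | zero => simp
  | succ j ih =>
    rw [flat_range_succ, List.length_append]
    have := List.length_pos_iff.mpr (hg j)
    omega

namespace Subst

theorem applyWord_cat_fin (σ : Subst A) (u : List A) (w : Word A) :
    σ.applyWord ((Word.fin u).cat w) = (Word.fin (σ.apply u)).cat (σ.applyWord w) := by
  cases w with
  | fin v => simp [Word.cat, applyWord, apply_append]
  | bot => rfl
  | inf g =>
    show Word.inf (σ.applyInf (Word.mix u g)) =
      Word.inf (Word.mix (σ.apply u) (σ.applyInf g))
    congr 1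
    apply σ.applyInf_unique
    intro m
    rcases Nat.le_total m u.length with h|h
    · rw [Word.map_mix_range_le u g h]
      exact Word.hasPrefix_of_prefix (σ.apply_prefix (List.take_prefix m u))
        (Word.hasPrefix_mix_left (σ.apply u) (σ.applyInf g))
    · obtain ⟨j, rfl⟩ := Nat.exists_eq_add_of_le h
      rw [Word.map_mix_range_add, apply_append]
      exact Word.hasPrefix_mix_append (σ.prefix_applyInf g j)

theorem applyWord_foldr (σ : Subst A) (L : List (List A)) (w : Word A) :
    σ.applyWord (L.foldr (fun x β => (Word.fin x).cat β) w) =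
      (L.map σ.apply).foldr (fun x β => (Word.fin x).cat β) (σ.applyWord w) := by
  induction L with
  | nil => rfl
  | cons x t ih => simp only [List.foldr_cons, List.map_cons, applyWord_cat_fin, ih]

end Subst

theorem foldr_cat_proper {L : List (List A)} (hL : ∀ x ∈ L, x ≠ []) {w : Word A}
    (hw : w.IsProper) : (L.foldr (fun x β => (Word.fin x).cat β) w).IsProper := by
  induction L with
  | nil => exact hw
  | cons x t ih =>
    exact Word.cat_proper (hL x List.mem_cons_self)
      (ih (fun y hy => hL y (List.mem_cons_of_mem x hy)))

end Helpers3

section Tower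

variable {A : Type u}

theorem singleton_prefix_of_head? {l : List A} {x : A} (h : l.head? = some x) :
    [x] <+: l := by
  cases l with
  | nil => simp at h
  | cons y t =>
    simp only [List.head?_cons, Option.some.injEq] at h
    exact ⟨t, by rw [h]; rfl⟩

/-- The level-`n` approximants `σ_n ⋯ σ_{n+m} (a_{n+m})` of a congenial sequence. -/
def cg (s : ℕ → Subst A) (a : ℕ → A) (n m : ℕ) : List A :=
  seg s n (n + m + 1) [a (n + m)]

theorem cg_ne_nil (s : ℕ → Subst A) (a : ℕ → A) (n m : ℕ) : cg s a n m ≠ [] :=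
  seg_ne_nil _ _ _ (by simp)

theorem cg_step (s : ℕ → Subst A) (a : ℕ → A) (n m : ℕ) :
    (s n).apply (cg s a (n + 1) m) = cg s a n (m + 1) := by
  have h := seg_succ_left s (n := n) (k := n + m + 2) (by omega)
    ([a (n + m + 1)])
  rw [cg, cg]
  have e1 : n + (m + 1) + 1 = n + m + 2 := by omega
  have e2 : n + 1 + m + 1 = n + m + 2 := by omega
  have e3 : n + (m + 1) = n + m + 1 := by omega
  have e4 : n + 1 + m = n + m + 1 := by omega
  rw [e1, e3, e2, e4, h]

theorem cg_chain {s : ℕ → Subst A} {a : ℕ → A} (ha : Congenial s a) (n m : ℕ) :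
    cg s a n m <+: cg s a n (m + 1) := by
  have h1 : cg s a n (m + 1) = seg s n (n + m + 1) ((s (n + m + 1)).1 (a (n + m + 1))) := by
    rw [cg]
    have e1 : n + (m + 1) + 1 = (n + m + 1) + 1 := by omega
    have e3 : n + (m + 1) = n + m + 1 := by omega
    rw [e1, e3, seg_succ_right s (by omega), Subst.apply_singleton]
  rw [h1, cg]
  exact seg_prefix s _ _ (singleton_prefix_of_head? (ha (n + m)))

/-- The level-`n` limit word of a congenial sequence. -/
noncomputable def tower (s : ℕ → Subst A) (a : ℕ → A) (n : ℕ) : Word A :=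
  limWord (fun m => cg s a n m)

theorem tower_zero (s : ℕ → Subst A) (a : ℕ → A) : tower s a 0 = genWord s a := by
  rw [tower, genWord]
  congr 1
  funext m
  rw [applyComp_eq_seg, cg]
  simp [Nat.zero_add]

theorem tower_proper {s : ℕ → Subst A} {a : ℕ → A} (ha : Congenial s a) (n : ℕ) :
    (tower s a n).IsProper := by
  rcases chain_cases (cg_chain ha n) with ⟨N, hN⟩ | hub
  · rw [tower, limWord_eq_fin hN]
    exact cg_ne_nil s a n N
  · obtain ⟨β, hβ, -⟩ := limWord_inf_of_chain (cg_chain ha n) hub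
    rw [tower, hβ]
    trivial

theorem tower_step {s : ℕ → Subst A} {a : ℕ → A} (ha : Congenial s a) (n : ℕ) :
    tower s a n = (s n).applyWord (tower s a (n + 1)) := by
  rcases chain_cases (cg_chain ha (n + 1)) with ⟨N, hN⟩ | hub
  · have h2 : ∀ m, N + 1 ≤ m → cg s a n m = (s n).apply (cg s a (n + 1) N) := by
      intro m hm
      obtain ⟨j, rfl⟩ : ∃ j, m = j + 1 := ⟨m - 1, by omega⟩
      rw [← cg_step, hN j (by omega)]
    rw [tower, tower, limWord_eq_fin h2, limWord_eq_fin (fun m hm => hN m hm)]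
    rfl
  · have hub' : ∀ k, ∃ m, k ≤ (cg s a n m).length := by
      intro k
      obtain ⟨m, hm⟩ := hub k
      refine ⟨m + 1, ?_⟩
      rw [← cg_step]
      exact hm.trans ((s n).length_le_apply _)
    obtain ⟨β, hβ, hβ2⟩ := limWord_inf_of_chain (cg_chain ha (n + 1)) hub
    obtain ⟨β', hβ', hβ'2⟩ := limWord_inf_of_chain (cg_chain ha n) hub'
    rw [tower, tower, hβ, hβ']
    show Word.inf β' = Word.inf ((s n).applyInf β)
    congr 1
    refine ((s n).applyInf_unique β β' ?_).symm
    intro k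
    obtain ⟨m, hm⟩ := hub k
    have h1 : (List.range k).map β <+: cg s a (n + 1) m := by
      rw [hβ2 m]
      exact (List.prefix_iff_eq_take.mpr
        (by simp [List.take_range, Nat.min_eq_left hm])).map β
    have h2 : (s n).apply ((List.range k).map β) <+: cg s a n (m + 1) := by
      rw [← cg_step]
      exact (s n).apply_prefix h1
    refine Word.hasPrefix_of_prefix h2 ?_
    rw [Word.hasPrefix_inf_iff, hβ'2 (m + 1)]
    simp

/-- A fin/inf discriminator. -/
def Word.IsFin : Word A → Prop
  | Word.fin _ => True
  | _ => False

theorem tower_fin {s : ℕ → Subst A} {a : ℕ → A} (ha : Congenial s a) {u : List A}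
    (h0 : tower s a 0 = Word.fin u) (n : ℕ) : (tower s a n).IsFin := by
  induction n with
  | zero => rw [h0]; trivial
  | succ k ih =>
    have hst := tower_step ha k
    cases hk : tower s a (k + 1) with
    | fin l => trivial
    | inf f =>
      rw [hk] at hst
      cases hc : tower s a k with
      | fin l => rw [hc] at hst; exact absurd hst (by simp [Subst.applyWord])
      | inf g => rw [hc] at ih; exact ih.elim
      | bot => exact absurd (hc ▸ tower_proper ha k) (by simp [Word.IsProper])
    | bot => exact absurd (hk ▸ tower_proper ha (k + 1)) (by simp [Word.IsProper])

end Tower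

section Helpers5

variable {A : Type u}

/-- Extract the list from a finite word. -/
def Word.getFin : Word A → List A
  | Word.fin l => l
  | _ => []

theorem directs_fin_ex (s : ℕ → Subst A) {l : List A} (hd : Directs s (Word.fin l)) :
    ∃ L : ℕ → List A, L 0 = l ∧ (∀ n, L n ≠ []) ∧ ∀ n, L n = (s n).apply (L (n + 1)) := by
  obtain ⟨β, h0, hp, hst⟩ := hd
  have hfin : ∀ n, ∃ m : List A, β n = Word.fin m := by
    intro n
    induction n with
    | zero => exact ⟨l, h0⟩
    | succ k ih =>
      obtain ⟨m, hm⟩ := ih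
      have h := hst k
      cases hc : β (k + 1) with
      | fin l' => exact ⟨l', rfl⟩
      | inf g => rw [hm, hc] at h; exact absurd h (by simp [Subst.applyWord])
      | bot => exact absurd (hc ▸ hp (k + 1)) (by simp [Word.IsProper])
  choose L hL using hfin
  refine ⟨L, ?_, ?_, ?_⟩
  · have := hL 0; rw [h0] at this; exact (Word.fin.injEq _ _).mp this.symm
  · intro n
    have := hp n
    rw [hL n] at this
    exact this
  · intro n
    have h := hst n
    rw [hL n, hL (n + 1)] at h
    exact (Word.fin.injEq _ _).mp h

theorem directs_inf_ex (s : ℕ → Subst A) {f : ℕ → A} (hd : Directs s (Word.inf f)) :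
    ∃ F : ℕ → (ℕ → A), F 0 = f ∧ ∀ n, F n = (s n).applyInf (F (n + 1)) := by
  obtain ⟨β, h0, hp, hst⟩ := hd
  have hinf : ∀ n, ∃ g : ℕ → A, β n = Word.inf g := by
    intro n
    induction n with
    | zero => exact ⟨f, h0⟩
    | succ k ih =>
      obtain ⟨g, hg⟩ := ih
      have h := hst k
      cases hc : β (k + 1) with
      | fin l' => rw [hg, hc] at h; exact absurd h (by simp [Subst.applyWord])
      | inf g' => exact ⟨g', rfl⟩
      | bot => exact absurd (hc ▸ hp (k + 1)) (by simp [Word.IsProper])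
  choose F hF using hinf
  refine ⟨F, ?_, ?_⟩
  · have := hF 0; rw [h0] at this; exact (Word.inf.injEq _ _).mp this.symm
  · intro n
    have h := hst n
    rw [hF n, hF (n + 1)] at h
    exact (Word.inf.injEq _ _).mp h

theorem L0_eq_seg {s : ℕ → Subst A} {L : ℕ → List A}
    (hst : ∀ n, L n = (s n).apply (L (n + 1))) (n : ℕ) : L 0 = seg s 0 n (L n) := by
  induction n with
  | zero => rw [seg_of_le s le_rfl]
  | succ k ih => rw [seg_succ_right s (Nat.zero_le k), ← hst k, ih]

theorem cg_zero (s : ℕ → Subst A) (a : ℕ → A) (m : ℕ) :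
    cg s a 0 m = seg s 0 (m + 1) [a m] := by
  simp [cg]

theorem cg_zero_succ (s : ℕ → Subst A) (a : ℕ → A) (m : ℕ) :
    cg s a 0 (m + 1) = seg s 0 (m + 1) ((s (m + 1)).1 (a (m + 1))) := by
  rw [cg_zero, seg_succ_right s (Nat.zero_le _), Subst.apply_singleton]

theorem collapse {s : ℕ → Subst A} {a : ℕ → A} (ha : Congenial s a) {N : ℕ}
    (hN : ∀ m, N ≤ m → cg s a 0 m = cg s a 0 N) :
    ∀ m, N ≤ m → (s (m + 1)).1 (a (m + 1)) = [a m] := by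
  intro m hm
  obtain ⟨t, ht⟩ := singleton_prefix_of_head? (ha m)
  suffices hts : t = [] by rw [← ht, hts, List.append_nil]
  have h1 : cg s a 0 (m + 1) = cg s a 0 m := by rw [hN (m+1) (by omega), hN m hm]
  rw [cg_zero_succ, ← ht, seg_append, cg_zero] at h1
  have h2 := congrArg List.length h1
  simp only [List.length_append] at h2
  rw [← seg_eq_nil_iff s 0 (m + 1) (w := t), ← List.length_eq_zero_iff]
  omega

theorem prefix_fold {s : ℕ → Subst A} {F : ℕ → ℕ → A}
    (hF : ∀ n, F n = (s n).applyInf (F (n + 1))) :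
    ∀ n (u : List A), (Word.inf (F n)).hasPrefix u →
      (Word.inf (F 0)).hasPrefix (seg s 0 n u) := by
  intro n
  induction n with
  | zero => intro u h; rwa [seg_of_le s le_rfl]
  | succ k ih =>
    intro u h
    rw [seg_succ_right s (Nat.zero_le k)]
    apply ih
    have hu : u = (List.range u.length).map (F (k + 1)) := Word.hasPrefix_inf_iff.mp h
    have h' := (s k).prefix_applyInf (F (k + 1)) u.length
    rw [← hu, ← hF k] at h'
    exact h'

theorem map_range_succ_shift (h : ℕ → A) (k : ℕ) :
    (List.range (k + 1)).map h = h 0 :: (List.range k).map (fun i => h (i + 1)) := by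
  rw [List.range_succ_eq_map, List.map_cons, List.map_map]
  rfl

theorem Word.hasPrefix_shift {h : ℕ → A} {x : A} {p : List A}
    (hp : (Word.inf h).hasPrefix (x :: p)) :
    (Word.inf (fun k => h (k + 1))).hasPrefix p := by
  rw [Word.hasPrefix_inf_iff] at hp ⊢
  apply List.ext_getElem
  · simp
  · intro i hi1 hi2
    have hi' : i + 1 < (x :: p).length := by simp; omega
    calc p[i] = (x :: p)[i + 1]'hi' := by simp
      _ = h (i + 1) := by rw [List.getElem_of_eq hp hi']; simp
      _ = ((List.range p.length).map (fun k => h (k + 1)))[i]'hi2 := by simp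

theorem Subst.head?_applyInf (σ : Subst A) (g : ℕ → A) :
    (σ.1 (g 0)).head? = some (σ.applyInf g 0) := by
  have hne : σ.1 (g 0) ≠ [] := σ.2 _
  have hlen : 0 < (σ.1 (g 0)).length := List.length_pos_iff.mpr hne
  have hpre := σ.prefix_applyInf g 1
  have h1 : (List.range 1).map g = [g 0] := by rw [show List.range 1 = [0] from rfl]; rfl
  rw [h1, σ.apply_singleton] at hpre
  have h2 := Word.getElem_of_hasPrefix hpre hlen
  rw [List.head?_eq_head hne, List.head_eq_getElem, h2]

theorem Word.hasPrefix_inf_singleton (h : ℕ → A) :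
    (Word.inf h).hasPrefix [h 0] := by
  have h1 : [h 0] = (List.range 1).map h := by rw [show List.range 1 = [0] from rfl]; rfl
  rw [h1]; exact Word.hasPrefix_inf_self h 1

end Helpers5

section Helpers6

variable {A : Type u}

theorem Subst.apply_cons (σ : Subst A) (a : A) (t : List A) :
    σ.apply (a :: t) = σ.1 a ++ σ.apply t := rfl

theorem head?_append_of_ne_nil {x y : List A} (h : x ≠ []) :
    (x ++ y).head? = x.head? := by
  cases x with
  | nil => exact absurd rfl h
  | cons a t => rfl

theorem directs_fin_decomp (s : ℕ → Subst A) :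
    ∀ (n : ℕ) (l : List A), l.length ≤ n → l ≠ [] → Directs s (Word.fin l) →
    ∃ (k : ℕ) (uu : Fin k → List A) (w : Word A),
      (∀ i, SCongenial s (Word.fin (uu i))) ∧ SCongenial s w ∧
      Word.fin l = (List.ofFn uu).foldr (fun x β => (Word.fin x).cat β) w := by
  intro n
  induction n with
  | zero =>
    intro l hl hne _
    exact absurd hl (by have := List.length_pos_iff.mpr hne; omega)
  | succ n ih =>
    intro l hlen hne hd
    obtain ⟨L, hL0, hLne, hLst⟩ := directs_fin_ex s hd
    set a : ℕ → A := fun m => (L (m + 1)).head (hLne (m + 1)) with ha_def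
    have haL : ∀ m, L (m + 1) = a m :: (L (m + 1)).tail :=
      fun m => (List.cons_head_tail _).symm
    have ha : Congenial s a := by
      intro m
      have h1 : L (m + 1) = (s (m + 1)).1 (a (m + 1)) ++ (s (m + 1)).apply ((L (m + 2)).tail) := by
        rw [hLst (m + 1)]
        conv_lhs => rw [haL (m + 1)]
        rfl
      have h2 : (L (m + 1)).head? = some (a m) := List.head?_eq_head _
      rw [h1, head?_append_of_ne_nil ((s (m + 1)).2 _)] at h2
      exact h2
    have hpre : ∀ m, cg s a 0 m <+: l := by
      intro m
      have h1 : [a m] <+: L (m + 1) := by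
        conv_rhs => rw [haL m]
        exact ⟨(L (m + 1)).tail, rfl⟩
      have h2 := seg_prefix s 0 (m + 1) h1
      rw [← L0_eq_seg hLst (m + 1), hL0, ← cg_zero] at h2
      exact h2
    rcases chain_cases (cg_chain ha 0) with ⟨N, hN⟩ | hub
    swap
    · obtain ⟨m, hm⟩ := hub (l.length + 1)
      have := (hpre m).length_le
      omega
    set v := cg s a 0 N with hv_def
    have hvne : v ≠ [] := cg_ne_nil s a 0 N
    have hgen : genWord s a = Word.fin v := by
      rw [← tower_zero, tower, limWord_eq_fin hN]
    have hSC : SCongenial s (Word.fin v) := ⟨hvne, a, ha, hgen⟩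
    by_cases hveq : v = l
    · refine ⟨0, fun i => i.elim0, Word.fin l, fun i => i.elim0, hveq ▸ hSC, ?_⟩
      simp
    · have hcol := collapse ha hN
      set t := (L (N + 1)).tail with ht_def
      have htne : t ≠ [] := by
        intro h0
        apply hveq
        have h1 : L (N + 1) = [a N] := by rw [haL N, ← ht_def, h0]
        rw [hv_def, cg_zero, ← h1, ← L0_eq_seg hLst (N + 1), hL0]
      have htail : ∀ m, N ≤ m → (L (m + 1)).tail = (s (m + 1)).apply ((L (m + 2)).tail) := by
        intro m hm
        have h1 : L (m + 1) = (s (m + 1)).apply (a (m + 1) :: (L (m + 2)).tail) := by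
          rw [hLst (m + 1)]
          conv_lhs => rw [haL (m + 1)]
        rw [Subst.apply_cons, hcol m hm] at h1
        have := congrArg List.tail h1
        simpa using this
      have htailne : ∀ m, N ≤ m → (L (m + 1)).tail ≠ [] := by
        intro m hm
        induction m, hm using Nat.le_induction with
        | base => exact htne
        | succ m hm ihm =>
          intro h0
          apply ihm
          rw [htail m hm, h0]
          rfl
      set T : ℕ → List A := fun m => if N + 1 ≤ m then (L m).tail else seg s m (N + 1) t
        with hT_def
      have hT0 : T 0 = seg s 0 (N + 1) t := by simp [hT_def]
      have hTst : ∀ m, T m = (s m).apply (T (m + 1)) := by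
        intro m
        rcases lt_trichotomy m N with h | h | h
        · simp only [hT_def, if_neg (by omega : ¬ N + 1 ≤ m), if_neg (by omega : ¬ N + 1 ≤ m + 1)]
          exact seg_succ_left s (by omega) t
        · simp only [hT_def, if_neg (by omega : ¬ N + 1 ≤ m), if_pos (by omega : N + 1 ≤ m + 1)]
          rw [seg_succ_left s (by omega : m < N + 1), seg_of_le s (by omega : N + 1 ≤ m + 1)]
          refine congrArg (s m).apply ?_
          rw [h]
        · obtain ⟨m', rfl⟩ : ∃ m', m = m' + 1 := ⟨m - 1, by omega⟩
          simp only [hT_def, if_pos (by omega : N + 1 ≤ m' + 1), if_pos (by omega : N + 1 ≤ m' + 2)]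
          exact htail m' (by omega)
      have hTne : ∀ m, T m ≠ [] := by
        intro m
        by_cases h : N + 1 ≤ m
        · simp only [hT_def, if_pos h]
          obtain ⟨m', rfl⟩ : ∃ m', m = m' + 1 := ⟨m - 1, by omega⟩
          exact htailne m' (by omega)
        · simp only [hT_def, if_neg h]
          exact seg_ne_nil s _ _ htne
      have hsplit : l = v ++ T 0 := by
        rw [hT0, ← hL0, L0_eq_seg hLst (N + 1)]
        conv_lhs => rw [haL N, ← ht_def]
        rw [show a N :: t = [a N] ++ t from rfl, seg_append, hv_def, cg_zero]
      have hd' : Directs s (Word.fin (T 0)) :=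
        ⟨fun m => Word.fin (T m), rfl, fun m => hTne m, fun m => by
          show Word.fin (T m) = (s m).applyWord (Word.fin (T (m + 1)))
          rw [hTst m]
          rfl⟩
      have hlen' : (T 0).length ≤ n := by
        have h1 := congrArg List.length hsplit
        have h2 : 1 ≤ v.length := List.length_pos_iff.mpr hvne
        simp only [List.length_append] at h1
        omega
      obtain ⟨k, uu, w, hu, hw, heq⟩ := ih (T 0) hlen' (hTne 0) hd'
      refine ⟨k + 1, Fin.cons v uu, w, ?_, hw, ?_⟩
      · intro i
        refine Fin.cases ?_ ?_ i
        · exact hSC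
        · exact hu
      · rw [List.ofFn_succ]
        simp only [Fin.cons_zero, Fin.cons_succ]
        rw [List.foldr_cons, ← heq]
        show Word.fin l = (Word.fin v).cat (Word.fin (T 0))
        rw [hsplit]
        rfl

end Helpers6

section Helpers7

variable {A : Type u}

theorem directs_inf_peel (s : ℕ → Subst A) (f : ℕ → A) (hd : Directs s (Word.inf f)) :
    SCongenial s (Word.inf f) ∨
    ∃ (v : List A) (g : ℕ → A), v ≠ [] ∧ SCongenial s (Word.fin v) ∧
      Directs s (Word.inf g) ∧ f = Word.mix v g := by
  obtain ⟨F, hF0, hFst⟩ := directs_inf_ex s hd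
  set a : ℕ → A := fun m => F (m + 1) 0 with ha_def
  have ha : Congenial s a := by
    intro m
    have h1 := (s (m + 1)).head?_applyInf (F (m + 2))
    rw [← hFst (m + 1)] at h1
    exact h1
  have hpre : ∀ m, (Word.inf f).hasPrefix (cg s a 0 m) := by
    intro m
    have h1 : (Word.inf (F (m + 1))).hasPrefix [a m] :=
      Word.hasPrefix_inf_singleton (F (m + 1))
    have h2 := prefix_fold hFst (m + 1) [a m] h1
    rw [hF0] at h2
    rw [cg_zero]
    exact h2
  rcases chain_cases (cg_chain ha 0) with ⟨N, hN⟩ | hub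
  · right
    set v := cg s a 0 N with hv_def
    have hvne : v ≠ [] := cg_ne_nil s a 0 N
    have hgen : genWord s a = Word.fin v := by
      rw [← tower_zero, tower, limWord_eq_fin hN]
    have hSC : SCongenial s (Word.fin v) := ⟨hvne, a, ha, hgen⟩
    have hcol : ∀ m, N ≤ m → (s (m + 1)).1 (F (m + 2) 0) = [F (m + 1) 0] := collapse ha hN
    -- the shifted infinite remainders at high levels
    have hshift : ∀ m, N ≤ m →
        (fun k => F (m + 1) (k + 1)) = (s (m + 1)).applyInf (fun k => F (m + 2) (k + 1)) := by
      intro m hm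
      refine ((s (m + 1)).applyInf_unique _ _ ?_).symm
      intro k
      have h1 : (Word.inf (F (m + 1))).hasPrefix
          ((s (m + 1)).apply ((List.range (k + 1)).map (F (m + 2)))) := by
        rw [hFst (m + 1)]
        exact (s (m + 1)).prefix_applyInf _ _
      rw [map_range_succ_shift (F (m + 2)) k, Subst.apply_cons, hcol m hm] at h1
      exact Word.hasPrefix_shift h1
    -- low-level remainders by downward recursion
    set D : ℕ → (ℕ → A) :=
      fun j => Nat.rec (motive := fun _ => ℕ → A) (fun k => F (N + 1) (k + 1))
        (fun j prev => (s (N - j)).applyInf prev) j with hD_def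
    set G : ℕ → (ℕ → A) :=
      fun m => if N + 1 ≤ m then (fun k => F m (k + 1)) else D (N + 1 - m) with hG_def
    have hGhigh : ∀ m, N + 1 ≤ m → G m = fun k => F m (k + 1) := by
      intro m hm; simp only [hG_def, if_pos hm]
    have hGlow : ∀ m, m ≤ N → G m = D (N + 1 - m) := by
      intro m hm; simp only [hG_def, if_neg (by omega : ¬ N + 1 ≤ m)]
    have hGst : ∀ m, G m = (s m).applyInf (G (m + 1)) := by
      intro m
      rcases Nat.lt_or_ge m (N + 1) with h | h
      · -- m ≤ N
        have h1 : G m = D (N + 1 - m) := hGlow m (by omega)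
        have h2 : N + 1 - m = (N - m) + 1 := by omega
        have h3 : D ((N - m) + 1) = (s (N - (N - m))).applyInf (D (N - m)) := rfl
        have h4 : N - (N - m) = m := by omega
        rw [h1, h2, h3, h4]
        refine congrArg (s m).applyInf ?_
        rcases Nat.lt_or_ge (m + 1) (N + 1) with h5 | h5
        · rw [hGlow (m + 1) (by omega)]
          refine congrArg D ?_
          omega
        · have h6 : m = N := by omega
          rw [hGhigh (m + 1) (by omega), h6, show N - N = 0 from by omega]
          rfl
      · -- m ≥ N + 1
        obtain ⟨m', rfl⟩ : ∃ m', m = m' + 1 := ⟨m - 1, by omega⟩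
        rw [hGhigh (m' + 1) h, hGhigh (m' + 2) (by omega)]
        exact hshift m' (by omega)
    have hdG : Directs s (Word.inf (G 0)) :=
      ⟨fun m => Word.inf (G m), rfl, fun m => trivial,
        fun m => congrArg Word.inf (hGst m)⟩
    -- the splitting f = v · G 0
    have hG_N1 : G (N + 1) = fun k => F (N + 1) (k + 1) := hGhigh (N + 1) le_rfl
    have hQpre : ∀ k, (Word.inf (G 0)).hasPrefix
        (seg s 0 (N + 1) ((List.range k).map (G (N + 1)))) := by
      intro k
      exact prefix_fold hGst (N + 1) _ (Word.hasPrefix_inf_self (G (N + 1)) k)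
    have hvQ : ∀ k, v ++ seg s 0 (N + 1) ((List.range k).map (G (N + 1))) =
        seg s 0 (N + 1) ((List.range (k + 1)).map (F (N + 1))) := by
      intro k
      rw [map_range_succ_shift (F (N + 1)) k,
        show F (N + 1) 0 :: (List.range k).map (fun i => F (N + 1) (i + 1)) =
          [F (N + 1) 0] ++ (List.range k).map (fun i => F (N + 1) (i + 1)) from rfl,
        seg_append]
      congr 1
      · rw [hv_def, cg_zero]
      · rw [hG_N1]
    have hfQ : ∀ k, (Word.inf f).hasPrefix
        (seg s 0 (N + 1) ((List.range (k + 1)).map (F (N + 1)))) := by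
      intro k
      have h1 := prefix_fold hFst (N + 1) _ (Word.hasPrefix_inf_self (F (N + 1)) (k + 1))
      rw [hF0] at h1
      exact h1
    have f_eq : ∀ j, f (v.length + j) = G 0 j := by
      intro j
      set Q := seg s 0 (N + 1) ((List.range (j + 1)).map (G (N + 1))) with hQ_def
      have hlenQ : j + 1 ≤ Q.length := by
        have h1 := length_le_seg s 0 (N + 1) ((List.range (j + 1)).map (G (N + 1)))
        simpa using h1
      have h1 : (Word.inf f).hasPrefix (v ++ Q) := by
        rw [hQ_def, hvQ (j + 1)]
        exact hfQ (j + 1)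
      have hidx : v.length + j < (v ++ Q).length := by
        rw [List.length_append]; omega
      have h2 := Word.getElem_of_hasPrefix h1 hidx
      have h3 : (v ++ Q)[v.length + j]'hidx = Q[j]'(by omega) := by
        rw [List.getElem_append_right (by omega : v.length ≤ v.length + j)]
        congr 1
        omega
      have h4' := hQpre (j + 1)
      rw [← hQ_def] at h4'
      have h4 := Word.getElem_of_hasPrefix h4' (i := j) (by omega)
      rw [← h2, h3, h4]
    have f_pre : ∀ i (hi : i < v.length), v[i] = f i :=
      fun i hi => Word.getElem_of_hasPrefix (hpre N) hi
    refine ⟨v, G 0, hvne, hSC, hdG, ?_⟩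
    funext n
    rcases Nat.lt_or_ge n v.length with h | h
    · rw [Word.mix, dif_pos h]
      exact (f_pre n h).symm
    · rw [Word.mix, dif_neg (by omega : ¬ n < v.length)]
      have h1 : n = v.length + (n - v.length) := by omega
      conv_lhs => rw [h1]
      exact f_eq (n - v.length)
  · left
    obtain ⟨β, hβ, hβ2⟩ := limWord_inf_of_chain (cg_chain ha 0) hub
    have hβf : β = f := by
      funext n
      obtain ⟨m, hm⟩ := hub (n + 1)
      have e1 : (cg s a 0 m)[n]'(by omega) = β n := by
        rw [List.getElem_of_eq (hβ2 m) (by omega)]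
        simp
      have e2 : (cg s a 0 m)[n]'(by omega) = f n :=
        Word.getElem_of_hasPrefix (hpre m) (by omega)
      rw [← e1, e2]
    refine ⟨trivial, a, ha, ?_⟩
    rw [← tower_zero, tower, hβ, hβf]

end Helpers7

section Helpers8

variable {A : Type u}

theorem Word.hasPrefix_inf_nil (f : ℕ → A) : (Word.inf f).hasPrefix [] := by
  rw [Word.hasPrefix_inf_iff]; rfl

/-- Peelability of an infinite directed word. -/
def PeelP (s : ℕ → Subst A) (g : ℕ → A) : Prop :=
  ∃ (v : List A) (g' : ℕ → A), v ≠ [] ∧ SCongenial s (Word.fin v) ∧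
    Directs s (Word.inf g') ∧ g = Word.mix v g'

open Classical in
/-- The sequence of remainders under repeated peeling. -/
noncomputable def peelSt (s : ℕ → Subst A) (f : ℕ → A) (hd : Directs s (Word.inf f)) :
    ℕ → {g : ℕ → A // Directs s (Word.inf g)}
  | 0 => ⟨f, hd⟩
  | n + 1 =>
    let p := peelSt s f hd n
    if h : PeelP s p.1 then ⟨h.choose_spec.choose, h.choose_spec.choose_spec.2.2.1⟩ else p

open Classical in
/-- The sequence of peeled pieces. -/
noncomputable def peelV (s : ℕ → Subst A) (f : ℕ → A) (hd : Directs s (Word.inf f))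
    (n : ℕ) : List A :=
  if h : PeelP s (peelSt s f hd n).1 then h.choose else []

variable {s : ℕ → Subst A} {f : ℕ → A} {hd : Directs s (Word.inf f)}

theorem map_shift_succ {γ : Type*} (g : ℕ → γ) (n m : ℕ) :
    (List.range (m + 1)).map (fun i => g (n + i)) =
      g n :: (List.range m).map (fun i => g (n + 1 + i)) := by
  rw [map_range_succ_shift (fun i => g (n + i)) m]
  refine congrArg₂ List.cons rfl ?_
  apply List.map_congr_left
  intro i _
  exact congrArg g (by omega)

open Classical in
theorem peelSt_succ (n : ℕ) (h : PeelP s (peelSt s f hd n).1) :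
    (peelSt s f hd (n + 1)).1 = h.choose_spec.choose := by
  show (if h : PeelP s (peelSt s f hd n).1 then
    (⟨h.choose_spec.choose, h.choose_spec.choose_spec.2.2.1⟩ :
      {g : ℕ → A // Directs s (Word.inf g)}) else peelSt s f hd n).1 = _
  rw [dif_pos h]

open Classical in
theorem peelV_eq (n : ℕ) (h : PeelP s (peelSt s f hd n).1) :
    peelV s f hd n = h.choose := dif_pos h

theorem peel_mix (n : ℕ) (h : PeelP s (peelSt s f hd n).1) :
    (peelSt s f hd n).1 = Word.mix (peelV s f hd n) ((peelSt s f hd (n + 1)).1) := by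
  rw [peelV_eq n h, peelSt_succ n h]
  exact h.choose_spec.choose_spec.2.2.2

theorem peelV_ne_nil (n : ℕ) (h : PeelP s (peelSt s f hd n).1) :
    peelV s f hd n ≠ [] := by
  rw [peelV_eq n h]; exact h.choose_spec.choose_spec.1

theorem peelV_scongenial (n : ℕ) (h : PeelP s (peelSt s f hd n).1) :
    SCongenial s (Word.fin (peelV s f hd n)) := by
  rw [peelV_eq n h]; exact h.choose_spec.choose_spec.2.1

theorem directs_inf_decomp (s : ℕ → Subst A) (f : ℕ → A) (hd : Directs s (Word.inf f)) :
    (∃ (k : ℕ) (uu : Fin k → List A) (w : Word A),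
        (∀ i, SCongenial s (Word.fin (uu i))) ∧ SCongenial s w ∧
        Word.inf f = (List.ofFn uu).foldr (fun x β => (Word.fin x).cat β) w) ∨
    (∃ uu : ℕ → List A, (∀ i, SCongenial s (Word.fin (uu i))) ∧
        (∀ k, (Word.inf f).hasPrefix (flat ((List.range k).map uu)))) := by
  classical
  set V : ℕ → List A := peelV s f hd with hV_def
  set St : ℕ → {g : ℕ → A // Directs s (Word.inf g)} := peelSt s f hd with hSt_def
  by_cases hall : ∀ n, PeelP s (St n).1
  · right
    refine ⟨V, fun i => peelV_scongenial i (hall i), ?_⟩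
    have key : ∀ k n, (Word.inf (St n).1).hasPrefix
        (flat ((List.range k).map (fun i => V (n + i)))) := by
      intro k
      induction k with
      | zero => intro n; exact Word.hasPrefix_inf_nil _
      | succ m ih =>
        intro n
        have h1 := map_shift_succ V n m
        rw [h1, show flat (V n :: (List.range m).map (fun i => V (n + 1 + i))) =
          V n ++ flat ((List.range m).map (fun i => V (n + 1 + i))) from rfl]
        rw [peel_mix n (hall n)]
        exact Word.hasPrefix_mix_append (ih (n + 1))
    intro k
    have h0 := key k 0
    have h1 : (fun i => V (0 + i)) = V := by funext i; rw [Nat.zero_add]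
    rw [h1] at h0
    exact h0
  · left
    push_neg at hall
    obtain ⟨n0, hn0⟩ := hall
    have hex : ∃ n, ¬ PeelP s (St n).1 := ⟨n0, hn0⟩
    set N := Nat.find hex with hN_def
    have hNP : ¬ PeelP s (St N).1 := Nat.find_spec hex
    have hbefore : ∀ i, i < N → PeelP s (St i).1 := by
      intro i hi
      by_contra hc
      have h2 : N ≤ i := hN_def ▸ Nat.find_le hc
      omega
    have hSCw : SCongenial s (Word.inf (St N).1) := by
      rcases directs_inf_peel s (St N).1 (St N).2 with h | h
      · exact h
      · exact absurd h hNP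
    refine ⟨N, fun i => V i.1, Word.inf (St N).1,
      fun i => peelV_scongenial i.1 (hbefore i.1 i.2), hSCw, ?_⟩
    have key : ∀ m n, (∀ i, i < m → PeelP s (St (n + i)).1) →
        Word.inf (St n).1 = ((List.range m).map (fun i => V (n + i))).foldr
          (fun x β => (Word.fin x).cat β) (Word.inf (St (n + m)).1) := by
      intro m
      induction m with
      | zero => intro n _; rw [Nat.add_zero]; rfl
      | succ m ih =>
        intro n hm
        have h1 := map_shift_succ V n m
        rw [h1, List.foldr_cons]
        have h2 := ih (n + 1) (fun i hi => by
          have := hm (i + 1) (by omega)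
          rwa [show n + (i + 1) = n + 1 + i from by omega] at this)
        rw [show n + 1 + m = n + (m + 1) from by omega] at h2
        have hP0 : PeelP s (St n).1 := by
          have := hm 0 (by omega)
          rwa [Nat.add_zero] at this
        rw [← h2, peel_mix n hP0]
        exact (Word.cat_fin_inf _ _).symm
    have h0 := key N 0 (fun i hi => by rw [Nat.zero_add]; exact hbefore i hi)
    rw [Nat.zero_add] at h0
    have h1 : (List.ofFn fun i : Fin N => V i.1) = (List.range N).map (fun i => V (0 + i)) := by
      rw [Word.ofFn_eq_map_range]
      apply List.map_congr_left
      intro i _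
      rw [Nat.zero_add]
    rw [h1, ← h0]
    rfl

end Helpers8

section Helpers9

variable {A : Type u}

theorem Word.eq_fin_getFin {w : Word A} (h : w.IsFin) : w = Word.fin w.getFin := by
  cases w with
  | fin l => rfl
  | inf f => exact h.elim
  | bot => exact h.elim

theorem scongenial_fin_chain {s : ℕ → Subst A} {u : List A}
    (h : SCongenial s (Word.fin u)) :
    ∃ L : ℕ → List A, L 0 = u ∧ (∀ n, L n ≠ []) ∧ ∀ n, L n = (s n).apply (L (n + 1)) := by
  obtain ⟨hne, a, ha, hgen⟩ := h
  have h0 : tower s a 0 = Word.fin u := by rw [tower_zero]; exact hgen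
  have hfin := tower_fin ha h0
  refine ⟨fun n => (tower s a n).getFin, ?_, ?_, ?_⟩
  · show (tower s a 0).getFin = u
    rw [h0]
    rfl
  · intro n
    have hp := tower_proper ha n
    rw [Word.eq_fin_getFin (hfin n)] at hp
    exact hp
  · intro n
    have hst := tower_step ha n
    rw [Word.eq_fin_getFin (hfin n), Word.eq_fin_getFin (hfin (n + 1))] at hst
    exact (Word.fin.injEq _ _).mp hst

theorem backward_case1 {s : ℕ → Subst A} {α : Word A} (k : ℕ) (uu : Fin k → List A)
    (w : Word A) (hu : ∀ i, SCongenial s (Word.fin (uu i))) (hw : SCongenial s w)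
    (heq : α = (List.ofFn uu).foldr (fun x β => (Word.fin x).cat β) w) :
    Directs s α := by
  choose L hL0 hLne hLst using fun i => scongenial_fin_chain (hu i)
  obtain ⟨hwp, aw, haw, hwgen⟩ := hw
  refine ⟨fun n => (List.ofFn (fun i => L i n)).foldr (fun x β => (Word.fin x).cat β)
    (tower s aw n), ?_, ?_, ?_⟩
  · show (List.ofFn (fun i => L i 0)).foldr (fun x β => (Word.fin x).cat β)
      (tower s aw 0) = α
    have h1 : (List.ofFn (fun i => L i 0)) = List.ofFn uu :=
      congrArg List.ofFn (funext fun i => hL0 i)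
    rw [h1, tower_zero, hwgen]
    exact heq.symm
  · intro n
    apply foldr_cat_proper
    · intro x hx
      rw [List.mem_ofFn] at hx
      obtain ⟨i, rfl⟩ := hx
      exact hLne i n
    · exact tower_proper haw n
  · intro n
    show _ = (s n).applyWord ((List.ofFn (fun i => L i (n + 1))).foldr
      (fun x β => (Word.fin x).cat β) (tower s aw (n + 1)))
    rw [Subst.applyWord_foldr, List.map_ofFn, ← tower_step haw n]
    refine congrArg₂ (fun (l : List (List A)) (b : Word A) =>
      l.foldr (fun x β => (Word.fin x).cat β) b) ?_ rfl
    exact congrArg List.ofFn (funext fun i => hLst i n)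

theorem backward_case2 {s : ℕ → Subst A} (f : ℕ → A) (uu : ℕ → List A)
    (hu : ∀ i, SCongenial s (Word.fin (uu i)))
    (hpre : ∀ k, (Word.inf f).hasPrefix (flat ((List.range k).map uu))) :
    Directs s (Word.inf f) := by
  choose L hL0 hLne hLst using fun i => scongenial_fin_chain (hu i)
  set Fl : ℕ → ℕ → List A := fun m k => flat ((List.range k).map (fun i => L i m))
    with hFl_def
  have hchain : ∀ m k, Fl m k <+: Fl m (k + 1) := fun m k => flat_range_prefix _ k
  have hub : ∀ m k, k ≤ (Fl m k).length := fun m k =>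
    le_length_flat_range (fun i => hLne i m) k
  have happ : ∀ m k, (s m).apply (Fl (m + 1) k) = Fl m k := by
    intro m k
    show (s m).apply (flat ((List.range k).map (fun i => L i (m + 1)))) =
      flat ((List.range k).map (fun i => L i m))
    rw [Subst.apply_flat, List.map_map]
    refine congrArg flat (List.map_congr_left ?_)
    intro i _
    exact (hLst i m).symm
  have hFex : ∀ m, ∃ g : ℕ → A, ∀ k, Fl m k = (List.range (Fl m k).length).map g := by
    intro m
    obtain ⟨β, _, hβ2⟩ := limWord_inf_of_chain (fun k => hchain m k)
      (fun k => ⟨k, hub m k⟩)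
    exact ⟨β, hβ2⟩
  choose F hF using hFex
  have hFpre : ∀ m k, (Word.inf (F m)).hasPrefix (Fl m k) := by
    intro m k
    rw [Word.hasPrefix_inf_iff]
    exact hF m k
  have hFst : ∀ m, F m = (s m).applyInf (F (m + 1)) := by
    intro m
    refine ((s m).applyInf_unique _ _ ?_).symm
    intro j
    have h1 : (List.range j).map (F (m + 1)) <+: Fl (m + 1) j := by
      rw [hF (m + 1) j]
      exact (List.prefix_iff_eq_take.mpr
        (by simp [List.take_range, Nat.min_eq_left (hub (m + 1) j)])).map (F (m + 1))
    have h2 : (s m).apply ((List.range j).map (F (m + 1))) <+: Fl m j := by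
      rw [← happ m j]
      exact (s m).apply_prefix h1
    exact Word.hasPrefix_of_prefix h2 (hFpre m j)
  have hF0 : F 0 = f := by
    funext n
    have hlen : n < (Fl 0 (n + 1)).length := by have := hub 0 (n + 1); omega
    have e1 : (Fl 0 (n + 1))[n]'hlen = F 0 n :=
      Word.getElem_of_hasPrefix (hFpre 0 (n + 1)) hlen
    have e2 : (Fl 0 (n + 1))[n]'hlen = f n := by
      have hp := hpre (n + 1)
      have hflat : flat ((List.range (n + 1)).map uu) = Fl 0 (n + 1) := by
        refine congrArg flat (List.map_congr_left ?_)
        intro i _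
        exact (hL0 i).symm
      rw [hflat] at hp
      exact Word.getElem_of_hasPrefix hp hlen
    rw [← e1, e2]
  exact ⟨fun m => Word.inf (F m),
    by show Word.inf (F 0) = Word.inf f; rw [hF0], fun m => trivial,
    fun m => congrArg Word.inf (hFst m)⟩

end Helpers9

/-- A word `α ∈ Σ⁺ ∪ Σ^ω` is directed by `s` iff it is a (finite or
infinite) concatenation of `s`-congenial words: either `α = u₀⋯u_{k-1}·w` with the `uᵢ`
finite `s`-congenial words and `w` `s`-congenial, or `α` is infinite and is the infinite
concatenation of a sequence of finite `s`-congenial words (equivalently, every partial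
concatenation is a prefix of `α`). -/
theorem directed_iff_concat_of_congenials {A : Type u} [Fintype A] [Nonempty A]
    (s : ℕ → Subst A) (α : Word A) (hα : α.IsProper) :
    Directs s α ↔
      ((∃ (k : ℕ) (uu : Fin k → List A) (w : Word A),
          (∀ i, SCongenial s (Word.fin (uu i))) ∧ SCongenial s w ∧
          α = (List.ofFn uu).foldr (fun x β => (Word.fin x).cat β) w) ∨
       (∃ uu : ℕ → List A,
          (∀ i, SCongenial s (Word.fin (uu i))) ∧
          α.IsInf ∧
          (∀ k, α.hasPrefix (flat ((List.range k).map uu))))) := by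
  constructor
  · intro hd
    cases α with
    | bot => exact absurd hα (by simp [Word.IsProper])
    | fin l => exact Or.inl (directs_fin_decomp s l.length l le_rfl hα hd)
    | inf f =>
      rcases directs_inf_decomp s f hd with h | ⟨uu, h1, h2⟩
      · exact Or.inl h
      · exact Or.inr ⟨uu, h1, trivial, h2⟩
  · rintro (⟨k, uu, w, hu, hw, heq⟩ | ⟨uu, hu, hinf, hpre⟩)
    · exact backward_case1 k uu w hu hw heq
    · cases α with
      | bot => exact hinf.elim
      | fin l => exact hinf.elim
      | inf f => exact backward_case2 f uu hu hpre
end
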